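/- For all integers 0 ≤ i ≤ d, 0 ≤ j ≤ e, and k ≥ 0, the q-Pfaff–Saalschütz-type identity qbinom(i+k, d)_q · qbinom(j+k, e)_q = Σ_{ℓ=0}^{d+e} q^{(ℓ-e-i)(ℓ-d-j)} qbinom(d+j-i, ℓ-i)_q · qbinom(e+i-j, ℓ-j)_q · qbinom(ℓ+k, d+e)_q holds, where qbinom(m,n)_q = 0 when n < 0 or n > m. -/

import Mathlib

open Polynomial Finset

noncomputable section

/-- The field ℚ(q) of rational functions. -/
abbrev K : Type := RatFunc ℚ

/-- The variable q of ℚ(q). -/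
def qq : K := RatFunc.X

/-- The q-integer [n]_t = (t^n - 1)/(t - 1), for n ∈ ℤ. -/
def qint (t : K) (n : ℤ) : K := (t ^ n - 1) / (t - 1)

/-- The q-factorial [n]!_t. -/
def qfact (t : K) (n : ℕ) : K := ∏ i ∈ range n, qint t (i + 1)

/-- The generalized q-binomial qbinom(m, n)_t = [m]_t [m-1]_t ⋯ [m-n+1]_t / [n]!_t. -/
def qbinom (t : K) (m : ℤ) (n : ℕ) : K := (∏ i ∈ range n, qint t (m - i)) / qfact t n

/-- The q-binomial with the vanishing convention: 0 unless 0 ≤ n ≤ m. -/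
def qbinomv (t : K) (m n : ℤ) : K :=
  if 0 ≤ n ∧ n ≤ m then (∏ i ∈ range n.toNat, qint t (m - i)) / qfact t n.toNat else 0

/-- The polynomial [n, x]_t = [n]_t + t^n x. -/
def qb (t : K) (n : ℤ) : Polynomial K := C (qint t n) + C (t ^ n) * X

/-- The polynomial qbase(m, x, n)_t = [m-n+1,x]_t ⋯ [m,x]_t / [n]!_t. -/
def qbase (t : K) (m : ℤ) (n : ℕ) : Polynomial K :=
  (∏ i ∈ range n, qb t (m - n + 1 + i)) * C (qfact t n)⁻¹


/-! For any nonzero `t` that is not a root of unity, the identity is proved by induction.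
The summand satisfies a three-term recurrence in `(i, d)` (Pascal's rule applied to both of its
`qbinomv` factors); summed against Pascal's rule for `qbinom t (ℓ + k) (d + e)`, it turns the
identities for `(i, d)` and `(i, d + 1)` into the one for `(i + 1, d + 1)`. Together with the
symmetry `(i, d) ↔ (j, e)` this reduces everything to `i = j = 0`. The summand is invariant under
`(i, j, ℓ) ↦ (i + 1, j + 1, ℓ + 1)`, so the case `i = j = 0` at `k + 1` is the case `i = j = 1`
at `k`, while at `k = 0` both sides vanish as soon as `0 < d`. -/

variable {t : K}

lemma qint_zero : qint t 0 = 0 := by simp [qint]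

lemma qint_add (ht₀ : t ≠ 0) (a b : ℤ) : qint t (a + b) = qint t a + t ^ a * qint t b := by
  rw [qint, qint, qint, zpow_add₀ ht₀]
  ring

lemma qint_natCast_ne_zero (ht : ¬ IsOfFinOrder t) {n : ℕ} (hn : n ≠ 0) : qint t n ≠ 0 := by
  have ht₁ : t ≠ 1 := fun h => ht (h ▸ IsOfFinOrder.one)
  refine div_ne_zero (sub_ne_zero.2 ?_) (sub_ne_zero.2 ht₁)
  rw [zpow_natCast]
  exact fun h => ht (isOfFinOrder_iff_pow_eq_one.2 ⟨n, Nat.pos_of_ne_zero hn, h⟩)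

lemma qfact_ne_zero (ht : ¬ IsOfFinOrder t) (n : ℕ) : qfact t n ≠ 0 :=
  prod_ne_zero_iff.2 fun i _ => by exact_mod_cast qint_natCast_ne_zero ht i.succ_ne_zero

lemma qbinom_zero_right (m : ℤ) : qbinom t m 0 = 1 := by simp [qbinom, qfact]

lemma qbinom_eq_zero {m : ℤ} {n : ℕ} (h₀ : 0 ≤ m) (h : m < n) : qbinom t m n = 0 := by
  rw [qbinom, prod_eq_zero (i := m.toNat) (mem_range.2 (by omega))
    (by rw [show m - m.toNat = 0 by omega, qint_zero]), zero_div]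

lemma qbinom_pascal (ht₀ : t ≠ 0) (ht : ¬ IsOfFinOrder t) (m : ℤ) (n : ℕ) :
    qbinom t m (n + 1) = t ^ ((n : ℤ) + 1) * qbinom t (m - 1) (n + 1) + qbinom t (m - 1) n := by
  have hsplit : qint t m = qint t (n + 1) + t ^ ((n : ℤ) + 1) * qint t (m - 1 - n) := by
    rw [← qint_add ht₀]; ring_nf
  have hn : qint t (n + 1) ≠ 0 := by exact_mod_cast qint_natCast_ne_zero ht n.succ_ne_zero
  have hF := qfact_ne_zero ht n
  simp only [qbinom, qfact, prod_range_succ, prod_range_succ' (fun i => qint t (m - i))]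
  simp only [Nat.cast_add, Nat.cast_one, Nat.cast_zero, sub_zero, sub_add_eq_sub_sub, hsplit]
  field_simp
  ring_nf

lemma qbinomv_eq_qbinom {m n : ℤ} (hm : 0 ≤ m) (hn : 0 ≤ n) :
    qbinomv t m n = qbinom t m n.toNat := by
  unfold qbinomv
  split_ifs with h
  · rfl
  · rw [qbinom_eq_zero hm (by omega)]

lemma qbinomv_eq_zero {m n : ℤ} (h : ¬ (0 ≤ n ∧ n ≤ m)) : qbinomv t m n = 0 := if_neg h

lemma qbinomv_zero_right {m : ℤ} (hm : 0 ≤ m) : qbinomv t m 0 = 1 := by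
  rw [qbinomv_eq_qbinom hm le_rfl, Int.toNat_zero, qbinom_zero_right]

lemma qbinomv_self (ht : ¬ IsOfFinOrder t) {m : ℤ} (hm : 0 ≤ m) : qbinomv t m m = 1 := by
  rw [qbinomv_eq_qbinom hm hm, qbinom, div_eq_one_iff_eq (qfact_ne_zero ht _), qfact,
    ← prod_range_reflect]
  refine prod_congr rfl fun i hi => congrArg _ ?_
  rw [mem_range] at hi
  omega

lemma qbinomv_pascal (ht₀ : t ≠ 0) (ht : ¬ IsOfFinOrder t) {m : ℤ} (hm : 0 < m) (n : ℤ) :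
    qbinomv t m n = t ^ n * qbinomv t (m - 1) n + qbinomv t (m - 1) (n - 1) := by
  rcases lt_trichotomy n 0 with hn | rfl | hn
  · rw [qbinomv_eq_zero (by omega), qbinomv_eq_zero (by omega), qbinomv_eq_zero (by omega)]
    ring
  · rw [qbinomv_zero_right hm.le, qbinomv_zero_right (by omega), qbinomv_eq_zero (by omega)]
    simp
  · obtain ⟨n, rfl⟩ : ∃ n' : ℕ, n = n' + 1 := ⟨(n - 1).toNat, by omega⟩
    rw [qbinomv_eq_qbinom hm.le (by omega), qbinomv_eq_qbinom (by omega) (by omega),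
      qbinomv_eq_qbinom (by omega) (by omega), add_sub_cancel_right, Int.toNat_natCast,
      Int.toNat_natCast_add_one]
    exact qbinom_pascal ht₀ ht m n

def saalschutzWeight (t : K) (i d j e ℓ : ℤ) : K :=
  t ^ ((ℓ - e - i) * (ℓ - d - j)) * qbinomv t (d + j - i) (ℓ - i) * qbinomv t (e + i - j) (ℓ - j)

lemma saalschutzWeight_comm (i d j e ℓ : ℤ) :
    saalschutzWeight t j e i d ℓ = saalschutzWeight t i d j e ℓ := by
  rw [saalschutzWeight, saalschutzWeight, mul_comm (ℓ - d - j)]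
  ring

lemma saalschutzWeight_add_one (i d j e ℓ : ℤ) :
    saalschutzWeight t (i + 1) d (j + 1) e (ℓ + 1) = saalschutzWeight t i d j e ℓ := by
  simp only [saalschutzWeight]
  ring_nf

lemma saalschutzWeight_eq_zero {i d j e ℓ : ℤ} (h : ℓ < i ∨ d + j < ℓ ∨ ℓ < j ∨ e + i < ℓ) :
    saalschutzWeight t i d j e ℓ = 0 := by
  rw [saalschutzWeight]
  by_cases h₁ : 0 ≤ ℓ - i ∧ ℓ - i ≤ d + j - i
  · rw [qbinomv_eq_zero (m := e + i - j) (by omega), mul_zero]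
  · rw [qbinomv_eq_zero h₁, mul_zero, zero_mul]

lemma saalschutzWeight_recurrence (ht₀ : t ≠ 0) (ht : ¬ IsOfFinOrder t) {i d j e : ℤ}
    (hi : i ≤ d + j) (hj : j ≤ e + i) (ℓ : ℤ) :
    saalschutzWeight t (i + 1) (d + 1) j e ℓ = saalschutzWeight t i d j e (ℓ - 1)
      - t ^ (d + e + 1) * saalschutzWeight t i d j e ℓ
      + t ^ (d + 1) * saalschutzWeight t i (d + 1) j e ℓ := by
  have hA := qbinomv_pascal ht₀ ht (m := d + 1 + j - i) (by omega) (ℓ - i)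
  have hB := qbinomv_pascal ht₀ ht (m := e + i + 1 - j) (by omega) (ℓ - j)
  have e₁ : t ^ ((ℓ - e - i - 1) * (ℓ - d - j - 1)) * t ^ (ℓ - j)
      = t ^ (d + 1) * t ^ ((ℓ - e - i) * (ℓ - (d + 1) - j)) := by
    rw [← zpow_add₀ ht₀, ← zpow_add₀ ht₀]; ring_nf
  have e₂ : t ^ ((ℓ - e - i - 1) * (ℓ - d - j - 1)) * t ^ (ℓ - j) * t ^ (ℓ - i)
      = t ^ (d + e + 1) * t ^ ((ℓ - e - i) * (ℓ - d - j)) := by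
    rw [← zpow_add₀ ht₀, ← zpow_add₀ ht₀, ← zpow_add₀ ht₀]; ring_nf
  simp only [saalschutzWeight]
  linear_combination (norm := ring_nf)
    qbinomv t (d + j - i) (ℓ - i - 1) * t ^ ((ℓ - e - i - 1) * (ℓ - d - j - 1)) * hB
    - qbinomv t (e + i - j) (ℓ - j) * t ^ (d + 1) * t ^ ((ℓ - e - i) * (ℓ - (d + 1) - j)) * hA
    + qbinomv t (d + j - i) (ℓ - i - 1) * qbinomv t (e + i - j) (ℓ - j) * e₁
    + qbinomv t (d + j - i) (ℓ - i) * qbinomv t (e + i - j) (ℓ - j) * (t ^ (ℓ - i) * e₁ - e₂)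

lemma sum_mul_qbinom_eq_sum_mul_qbinom_succ (ht₀ : t ≠ 0) (ht : ¬ IsOfFinOrder t) (c : ℤ → K)
    (N : ℕ) (k : ℤ) (h₀ : c (-1) = 0) (hN : c (N + 1) = 0) :
    ∑ ℓ ∈ range (N + 1), c ℓ * qbinom t (ℓ + k) N =
      ∑ ℓ ∈ range (N + 2), (c (ℓ - 1) - t ^ ((N : ℤ) + 1) * c ℓ) * qbinom t (ℓ + k) (N + 1) := by
  have hshift : ∑ ℓ ∈ range (N + 2), c (ℓ - 1) * qbinom t (ℓ + k) (N + 1) =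
      ∑ ℓ ∈ range (N + 1), c ℓ * qbinom t (ℓ + 1 + k) (N + 1) := by
    rw [sum_range_succ']
    simp [h₀]
  have htrunc : ∑ ℓ ∈ range (N + 2), c ℓ * qbinom t (ℓ + k) (N + 1) =
      ∑ ℓ ∈ range (N + 1), c ℓ * qbinom t (ℓ + k) (N + 1) := by
    rw [sum_range_succ]
    simp [hN]
  simp only [sub_mul, sum_sub_distrib, mul_assoc]
  rw [← mul_sum, hshift, htrunc, mul_sum, ← sum_sub_distrib]
  refine sum_congr rfl fun ℓ _ => ?_
  have := qbinom_pascal ht₀ ht (ℓ + 1 + k) N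
  rw [show (ℓ : ℤ) + 1 + k - 1 = ℓ + k by ring] at this
  linear_combination -c ℓ * this

def PfaffSaalschutz (t : K) (i d j e k : ℕ) : Prop :=
  qbinom t (i + k) d * qbinom t (j + k) e =
    ∑ ℓ ∈ range (d + e + 1), saalschutzWeight t i d j e ℓ * qbinom t (ℓ + k) (d + e)

namespace PfaffSaalschutz

variable {i d j e k : ℕ}

lemma symm (h : PfaffSaalschutz t i d j e k) : PfaffSaalschutz t j e i d k := by
  rw [PfaffSaalschutz, mul_comm, h, add_comm e d]
  exact sum_congr rfl fun ℓ _ => by rw [saalschutzWeight_comm]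

lemma zero_zero (ht : ¬ IsOfFinOrder t) (hje : j ≤ e) : PfaffSaalschutz t 0 0 j e k := by
  rw [PfaffSaalschutz, sum_eq_single_of_mem j (mem_range.2 (by omega))]
  · simp [saalschutzWeight, qbinom_zero_right, qbinomv_self ht,
      qbinomv_zero_right (by omega : (0 : ℤ) ≤ e - j)]
  · intro ℓ _ hℓ
    rw [saalschutzWeight_eq_zero (by omega), zero_mul]

lemma k_zero (hid : i < d) : PfaffSaalschutz t i d j e 0 := by
  rw [PfaffSaalschutz, Nat.cast_zero, add_zero, qbinom_eq_zero (by omega) (by omega), zero_mul]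
  refine (sum_eq_zero fun ℓ hℓ => ?_).symm
  rw [mem_range] at hℓ
  rcases Nat.lt_or_ge ℓ (d + e) with hlt | hge
  · rw [add_zero, qbinom_eq_zero (by omega) (by exact_mod_cast hlt), mul_zero]
  · rw [saalschutzWeight_eq_zero (by omega), zero_mul]

lemma k_succ (hid : i < d) (h : PfaffSaalschutz t (i + 1) d (j + 1) e k) :
    PfaffSaalschutz t i d j e (k + 1) := by
  rw [PfaffSaalschutz, sum_range_succ, saalschutzWeight_eq_zero (by omega), zero_mul, add_zero]
  rw [PfaffSaalschutz, sum_range_succ', saalschutzWeight_eq_zero (by omega), zero_mul,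
    add_zero] at h
  push_cast at h ⊢
  simp only [saalschutzWeight_add_one] at h
  convert h using 3 <;> ring_nf

lemma succ_succ (ht₀ : t ≠ 0) (ht : ¬ IsOfFinOrder t) (hid : i ≤ d) (hje : j ≤ e)
    (h : PfaffSaalschutz t i d j e k) (h' : PfaffSaalschutz t i (d + 1) j e k) :
    PfaffSaalschutz t (i + 1) (d + 1) j e k := by
  rw [PfaffSaalschutz, add_right_comm d 1 e] at h' ⊢
  rw [PfaffSaalschutz, sum_mul_qbinom_eq_sum_mul_qbinom_succ ht₀ ht _ _ _
    (saalschutzWeight_eq_zero (by omega)) (saalschutzWeight_eq_zero (by omega))] at h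
  calc qbinom t (↑(i + 1) + k) (d + 1) * qbinom t (j + k) e
      = t ^ ((d : ℤ) + 1) * (qbinom t (i + k) (d + 1) * qbinom t (j + k) e)
        + qbinom t (i + k) d * qbinom t (j + k) e := by
        rw [qbinom_pascal ht₀ ht]; push_cast; ring_nf
    _ = _ := by
        rw [h, h', mul_sum, ← sum_add_distrib]
        refine sum_congr rfl fun ℓ _ => ?_
        rw [Nat.cast_add_one, Nat.cast_add_one,
          saalschutzWeight_recurrence ht₀ ht (by omega) (by omega)]
        push_cast
        ring

lemma of_zero_left (ht₀ : t ≠ 0) (ht : ¬ IsOfFinOrder t) (hje : j ≤ e)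
    (h : ∀ d, PfaffSaalschutz t 0 d j e k) (hid : i ≤ d) : PfaffSaalschutz t i d j e k := by
  induction i generalizing d with
  | zero => exact h d
  | succ i ih =>
    obtain ⟨d, rfl⟩ : ∃ d', d = d' + 1 := ⟨d - 1, by omega⟩
    exact succ_succ ht₀ ht (by omega) hje (ih (by omega)) (ih (by omega))

lemma of_zero_zero (ht₀ : t ≠ 0) (ht : ¬ IsOfFinOrder t)
    (h : ∀ d e, 0 < d → 0 < e → PfaffSaalschutz t 0 d 0 e k) (hid : i ≤ d) (hje : j ≤ e) :
    PfaffSaalschutz t i d j e k := by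
  have h₀ (d e : ℕ) : PfaffSaalschutz t 0 d 0 e k := by
    rcases Nat.eq_zero_or_pos d with rfl | hd
    · exact zero_zero ht e.zero_le
    rcases Nat.eq_zero_or_pos e with rfl | he
    · exact (zero_zero ht d.zero_le).symm
    exact h d e hd he
  exact of_zero_left ht₀ ht hje
    (fun d => (of_zero_left ht₀ ht d.zero_le (fun e => h₀ e d) hje).symm) hid

end PfaffSaalschutz

theorem pfaffSaalschutz (ht₀ : t ≠ 0) (ht : ¬ IsOfFinOrder t) {i d j e k : ℕ} (hid : i ≤ d)
    (hje : j ≤ e) : PfaffSaalschutz t i d j e k := by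
  induction k generalizing i d j e with
  | zero => exact .of_zero_zero ht₀ ht (fun d e hd _ => .k_zero hd) hid hje
  | succ k ih => exact .of_zero_zero ht₀ ht (fun d e hd he => .k_succ hd (ih hd he)) hid hje

lemma qq_not_isOfFinOrder : ¬ IsOfFinOrder qq := by
  rw [isOfFinOrder_iff_pow_eq_one]
  rintro ⟨n, hn, h⟩
  rw [qq, ← RatFunc.algebraMap_X, ← map_pow, ← map_one (algebraMap ℚ[X] _)] at h
  have := congrArg natDegree (RatFunc.algebraMap_injective ℚ h)
  rw [natDegree_pow, natDegree_X, mul_one, natDegree_one] at this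
  omega

theorem q_pfaff_saalschutz (i d j e k : ℕ) (hid : i ≤ d) (hje : j ≤ e) :
    qbinom qq (i + k) d * qbinom qq (j + k) e = ∑ ℓ ∈ range (d + e + 1),
      qq ^ ((((ℓ : ℤ) - e - i) * ((ℓ : ℤ) - d - j))) *
        qbinomv qq ((d : ℤ) + j - i) ((ℓ : ℤ) - i) *
        qbinomv qq ((e : ℤ) + i - j) ((ℓ : ℤ) - j) *
        qbinom qq (ℓ + k) (d + e) :=
  pfaffSaalschutz RatFunc.X_ne_zero qq_not_isOfFinOrder hid hje
end
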